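/- arXiv:2002.02129 — 5 statements merged into one kernel-verified Lean document; each statement's English description precedes it below -/
import Mathlib

section
/- Let A ⊆ B be integral domains and f a nonzero element of A such that A[1/f] = B[1/f] (i.e., the localizations at f coincide inside the fraction field of B) and fB ∩ A = fA. Then A = B. -/
/-- Lemma (Bhatwadekar–Dutta): if `A ⊆ B` are domains, `f ∈ A` nonzero,
`A[1/f] = B[1/f]` and `fB ∩ A = fA`, then `A = B`. -/
theorem stmt_0 {B : Type*} [CommRing B] [IsDomain B] (A : Subring B)
    (f : B) (hfA : f ∈ A) (hf : f ≠ 0)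
    (hloc : ∀ b : B, ∃ (n : ℕ) (a : B), a ∈ A ∧ f ^ n * b = a)
    (hcap : ∀ a : B, a ∈ A → (∃ b : B, a = f * b) → ∃ a' ∈ A, a = f * a') :
    A = ⊤ := by
  have key : ∀ (n : ℕ) (b : B), f ^ n * b ∈ A → b ∈ A := by
    intro n
    induction n with
    | zero => intro b hb; simpa using hb
    | succ n ih =>
      intro b hb
      obtain ⟨a', ha', heq⟩ := hcap (f ^ (n + 1) * b) hb
        ⟨f ^ n * b, by ring⟩
      have : f ^ n * b = a' := by
        apply mul_left_cancel₀ hf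
        rw [← heq]; ring
      exact ih b (this ▸ ha')
  rw [eq_top_iff]
  intro b _
  obtain ⟨n, a, ha, heq⟩ := hloc b
  exact key n b (heq ▸ ha)
end

section
/- Let k be a field and X' a variable of the polynomial ring k[X₁,…,Xₙ] (i.e., there exist elements generating the polynomial ring together with X' as a polynomial ring). Then the ideal (X', X₁) equals the unit ideal if and only if X' = αX₁ + β for some units α, β ∈ k*. -/
/-!
Write `X' = σ X₀` for a `k`-automorphism `σ`. If `(σ X₀, X₀) = 1`, then `(σ⁻¹ X₀, X₀) = 1`,
so `σ⁻¹ X₀` is a unit modulo `X₀`, i.e. `σ⁻¹ X₀ = c + X₀ h` with `c ∈ k*`. Applying `σ` gives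
`X₀ - c = X' · σ h`. Since `X'` is prime (as the image of `X₀`) and `X₀ - c` is irreducible,
`σ h` is a unit, hence a nonzero constant, and `X'` is an affine function of `X₀`.
-/

open MvPolynomial

theorem isUnit_map_of_span_pair_eq_top {A B : Type*} [CommSemiring A] [CommSemiring B]
    (f : A →+* B) {a b : A} (h : Ideal.span {a, b} = ⊤) (hb : f b = 0) : IsUnit (f a) := by
  obtain ⟨u, v, huv⟩ := Ideal.mem_span_pair.mp (h ▸ Submodule.mem_top : (1 : A) ∈ _)
  refine IsUnit.of_mul_eq_one (f u) ?_
  simpa [hb, mul_comm] using congrArg f huv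

namespace MvPolynomial

theorem exists_eq_C_mul_of_associated {σ k : Type*} [Field k] {p q : MvPolynomial σ k}
    (h : Associated p q) : ∃ d : k, d ≠ 0 ∧ p = C d * q := by
  obtain ⟨u, rfl⟩ := h.symm
  obtain ⟨d, hd, hu⟩ := isUnit_iff_eq_C_of_isReduced.mp u.isUnit
  exact ⟨d, hd.ne_zero, by rw [← hu, mul_comm]⟩

theorem span_C_mul_X_add_C_X_eq_top {σ k : Type*} [Field k] (i : σ) (α : k) {β : k}
    (hβ : β ≠ 0) : Ideal.span {C α * X i + C β, X i} = (⊤ : Ideal (MvPolynomial σ k)) := by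
  rw [show C α * X i + C β = C β + X i * C α by ring, Ideal.span_pair_add_right_mul]
  exact Ideal.eq_top_of_isUnit_mem _ (Ideal.subset_span (Set.mem_insert _ _)) (hβ.isUnit.map C)

section FinSucc

variable {R : Type*} [CommRing R] {m : ℕ}

theorem finSuccEquiv_X_zero_sub_C (r : R) :
    finSuccEquiv R m (X 0 - C r) = Polynomial.X - Polynomial.C (C r) := by
  simp [finSuccEquiv_apply]

theorem X_zero_dvd_sub_C_iff {p : MvPolynomial (Fin (m + 1)) R} {r : R} :
    X 0 ∣ p - C r ↔ (finSuccEquiv R m p).coeff 0 = C r := by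
  rw [← map_dvd_iff (finSuccEquiv R m), finSuccEquiv_X_zero, Polynomial.X_dvd_iff, map_sub,
    Polynomial.coeff_sub, sub_eq_zero]
  simp [finSuccEquiv_apply]

theorem prime_X_zero_sub_C [IsDomain R] (r : R) :
    Prime (X 0 - C r : MvPolynomial (Fin (m + 1)) R) := by
  rw [← MulEquiv.prime_iff (finSuccEquiv R m), finSuccEquiv_X_zero_sub_C]
  exact Polynomial.prime_X_sub_C _

end FinSucc

variable {k : Type*} [Field k] {m : ℕ}

theorem exists_X_zero_dvd_sub_C_of_span_eq_top {g : MvPolynomial (Fin (m + 1)) k}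
    (h : Ideal.span {g, X 0} = ⊤) : ∃ c : k, c ≠ 0 ∧ X 0 ∣ g - C c := by
  let φ := Polynomial.constantCoeff.comp (finSuccEquiv k m).toRingHom
  have hunit : IsUnit (φ g) :=
    isUnit_map_of_span_pair_eq_top φ h (by simp [φ, finSuccEquiv_X_zero])
  obtain ⟨c, hc, hgc⟩ := isUnit_iff_eq_C_of_isReduced.mp hunit
  exact ⟨c, hc.ne_zero, X_zero_dvd_sub_C_iff.mpr hgc⟩

theorem exists_associated_X_zero_sub_C_of_span_eq_top
    (σ : MvPolynomial (Fin (m + 1)) k ≃ₐ[k] MvPolynomial (Fin (m + 1)) k)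
    (h : Ideal.span {σ (X 0), X 0} = ⊤) :
    ∃ c : k, c ≠ 0 ∧ Associated (σ (X 0)) (X 0 - C c) := by
  have hsymm : Ideal.span {σ.symm (X 0), X 0} = ⊤ := by
    rw [Ideal.span_pair_comm]
    simpa [Ideal.map_span, Set.image_pair, Ideal.map_top] using congrArg (Ideal.map σ.symm) h
  obtain ⟨c, hc, g, hg⟩ := exists_X_zero_dvd_sub_C_of_span_eq_top hsymm
  have hσC : σ (C c) = C c := by simpa using σ.commutes c
  have hdvd : σ (X 0) ∣ X 0 - C c := ⟨σ g, by simpa [hσC] using congrArg σ hg⟩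
  have hprime : Prime (σ (X 0)) := (MulEquiv.prime_iff σ).mpr (X_prime (R := k))
  exact ⟨c, hc, hprime.irreducible.associated_of_dvd (prime_X_zero_sub_C c).irreducible hdvd⟩

end MvPolynomial

/-- Sathaye's lemma: a variable `X'` of `k[X₁,…,Xₙ]` is comaximal with `X₁`
iff `X' = αX₁ + β` with `α, β ∈ k*`. -/
theorem stmt_1 {k : Type*} [Field k] (n : ℕ) (hn : 0 < n)
    (X' : MvPolynomial (Fin n) k)
    (hvar : ∃ σ : MvPolynomial (Fin n) k ≃ₐ[k] MvPolynomial (Fin n) k,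
      σ (X ⟨0, hn⟩) = X') :
    Ideal.span {X', X ⟨0, hn⟩} = ⊤ ↔
      ∃ α β : k, α ≠ 0 ∧ β ≠ 0 ∧ X' = C α * X ⟨0, hn⟩ + C β := by
  obtain ⟨m, rfl⟩ := Nat.exists_eq_add_one_of_ne_zero hn.ne'
  obtain ⟨σ, rfl⟩ := hvar
  change Ideal.span {σ (X 0), X 0} = ⊤ ↔
    ∃ α β : k, α ≠ 0 ∧ β ≠ 0 ∧ σ (X 0) = C α * X 0 + C β
  constructor
  · intro h
    obtain ⟨c, hc, hassoc⟩ := exists_associated_X_zero_sub_C_of_span_eq_top σ h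
    obtain ⟨d, hd, hσ⟩ := exists_eq_C_mul_of_associated hassoc
    refine ⟨d, -(d * c), hd, by simp [hd, hc], ?_⟩
    rw [hσ, map_neg, map_mul]
    ring
  · rintro ⟨α, β, -, hβ, hX'⟩
    rw [hX']
    exact span_C_mul_X_add_C_X_eq_top _ α hβ
end

section
/- Let k be a field, A a normal affine k-domain containing elements a, b with b ≠ 0, and C = A[a/b] inside the fraction field of A. Suppose C = k[X, a/b] is a polynomial ring in two variables over k with X ∈ C, and bA ∩ k[X,a] = b·k[X,a], and A[1/b] = k[X,a][1/b]. Then A = k[X,a]. -/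
/-- If `C = A[a/b] = k[x, a/b]` is a polynomial ring in two variables inside
`Frac(A)`, `bA ∩ k[x,a] = b·k[x,a]` and `A[1/b] = k[x,a][1/b]`,
then `A = k[x,a]`. -/
theorem stmt_8 {k A : Type*} [Field k] [CommRing A] [IsDomain A] [Algebra k A]
    (a b x : A) (hb : b ≠ 0)
    (hind : AlgebraicIndependent k ![x, a])
    (hCind : AlgebraicIndependent k
      ![algebraMap A (FractionRing A) x,
        algebraMap A (FractionRing A) a / algebraMap A (FractionRing A) b])
    (hC : Algebra.adjoin k (Set.range (algebraMap A (FractionRing A)) ∪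
        {algebraMap A (FractionRing A) a / algebraMap A (FractionRing A) b}) =
      Algebra.adjoin k ({algebraMap A (FractionRing A) x,
        algebraMap A (FractionRing A) a / algebraMap A (FractionRing A) b} :
          Set (FractionRing A)))
    (hcap : ∀ h ∈ Algebra.adjoin k ({x, a} : Set A),
      (∃ c : A, h = b * c) → ∃ h' ∈ Algebra.adjoin k ({x, a} : Set A), h = b * h')
    (hloc : ∀ c : A, ∃ (m : ℕ), ∃ h ∈ Algebra.adjoin k ({x, a} : Set A),
      b ^ m * c = h) :
    Algebra.adjoin k ({x, a} : Set A) = ⊤ := by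
  have key : ∀ (m : ℕ) (c : A), b ^ m * c ∈ Algebra.adjoin k ({x, a} : Set A) →
      c ∈ Algebra.adjoin k ({x, a} : Set A) := by
    intro m
    induction m with
    | zero => intro c hc; simpa using hc
    | succ n ih =>
      intro c hc
      obtain ⟨h', hh', heq⟩ := hcap (b ^ (n + 1) * c) hc ⟨b ^ n * c, by ring⟩
      have : b ^ n * c = h' := by
        apply mul_left_cancel₀ hb
        rw [← heq]; ring
      exact ih c (this ▸ hh')
  rw [eq_top_iff]
  intro c _
  obtain ⟨m, h, hh, heq⟩ := hloc c
  exact key m c (heq ▸ hh)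
end

section
/- Let k be a field of characteristic p ≠ 0, R = k[π] a polynomial ring in one variable, m a positive integer, and f(X,Y) ∈ k[X,Y] such that k[X,Y]/(f) ≅ k[1] (a polynomial ring in one variable) but k[X,Y] is not a polynomial ring in one variable over k[f]. Set A = R[X,Y,Z]/(πᵐZ − f(X,Y)). Then A ⊗_R k(P) ≅ k(P)[2] for every prime ideal P of R. -/
/-!
If the image `c` of `πᵐ` in `k(P)` is nonzero, the relation `c • Z = f(X, Y)` merely eliminates
`Z`, and the fibre is `k(P)[X, Y]`. If `c = 0`, the fibre is `(k(P)[X, Y] ⧸ (f))[Z]`, and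
`k(P)[X, Y] ⧸ (f) ≅ k(P) ⊗[k] (k[X, Y] ⧸ (f)) ≅ k(P)[T]` by base change of `k[X, Y] ⧸ (f) ≅ k[T]`.
-/

open MvPolynomial

namespace Polynomial

variable {S : Type*} [CommRing S]

theorem span_C_mul_X_sub_C {a : S} (ha : IsUnit a) (b : S) :
    Ideal.span {C a * X - C b} = Ideal.span {X - C (↑ha.unit⁻¹ * b)} := by
  rw [← Ideal.span_singleton_mul_left_unit (isUnit_C.mpr ha) (X - C _), mul_sub, ← C_mul,
    ← mul_assoc, IsUnit.mul_val_inv, one_mul]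

noncomputable def quotientSpanCMulXSubCAlgEquiv {a : S} (ha : IsUnit a) (b : S) :
    (S[X] ⧸ Ideal.span {C a * X - C b}) ≃ₐ[S] S :=
  (Ideal.quotientEquivAlgOfEq S (span_C_mul_X_sub_C ha b)).trans
    (quotientSpanXSubCAlgEquiv _)

variable (R : Type*) [CommRing R] [Algebra R S]

noncomputable def quotientSpanCAlgEquiv (b : S) :
    (S[X] ⧸ Ideal.span {C b}) ≃ₐ[R] (S ⧸ Ideal.span {b})[X] :=
  AlgEquiv.ofRingEquiv
    (f := (Ideal.quotEquivOfEq (by rw [Ideal.map_span, Set.image_singleton])).trans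
      (Ideal.polynomialQuotientEquivQuotientPolynomial (Ideal.span {b})).symm)
    (fun r => by
      rw [IsScalarTower.algebraMap_apply R S[X], Ideal.Quotient.algebraMap_eq,
        RingEquiv.trans_apply, Ideal.quotEquivOfEq_mk,
        Ideal.polynomialQuotientEquivQuotientPolynomial_symm_mk, Polynomial.algebraMap_apply,
        Polynomial.map_C, Polynomial.algebraMap_apply]
      rfl)

end Polynomial

namespace MvPolynomial

variable (R : Type*) [CommRing R] (n : ℕ)

noncomputable def finSuccLastEquiv :
    MvPolynomial (Fin (n + 1)) R ≃ₐ[R] Polynomial (MvPolynomial (Fin n) R) :=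
  (renameEquiv R finSuccEquivLast).trans (optionEquivLeft R (Fin n))

variable {R n}

@[simp]
theorem finSuccLastEquiv_X_last : finSuccLastEquiv R n (X (Fin.last n)) = Polynomial.X := by
  simp [finSuccLastEquiv, optionEquivLeft_X_none]

@[simp]
theorem finSuccLastEquiv_rename_castSucc (g : MvPolynomial (Fin n) R) :
    finSuccLastEquiv R n (rename Fin.castSucc g) = Polynomial.C g := by
  have : (finSuccLastEquiv R n).toAlgHom.comp (rename Fin.castSucc) =
      Polynomial.CAlgHom.comp (AlgHom.id R _) := by
    ext i
    simp [finSuccLastEquiv, optionEquivLeft_X_some]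
  simpa using DFunLike.congr_fun this g

@[simp]
theorem finSuccLastEquiv_C (c : R) : finSuccLastEquiv R n (C c) = Polynomial.C (C c) := by
  simp [finSuccLastEquiv, optionEquivLeft_C]

noncomputable def quotientSpanCMulXLastSubRenameEquiv {c : R} (hc : IsUnit c)
    (g : MvPolynomial (Fin n) R) :
    (MvPolynomial (Fin (n + 1)) R ⧸
        Ideal.span {C c * X (Fin.last n) - rename Fin.castSucc g}) ≃ₐ[R]
      MvPolynomial (Fin n) R :=
  (Ideal.quotientEquivAlg _ _ (finSuccLastEquiv R n)
      (by simp [Ideal.map_span, Set.image_singleton])).trans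
    ((Polynomial.quotientSpanCMulXSubCAlgEquiv (hc.map C) g).restrictScalars R)

noncomputable def quotientSpanRenameCastSuccEquiv (g : MvPolynomial (Fin n) R) :
    (MvPolynomial (Fin (n + 1)) R ⧸ Ideal.span {rename Fin.castSucc g}) ≃ₐ[R]
      Polynomial (MvPolynomial (Fin n) R ⧸ Ideal.span {g}) :=
  (Ideal.quotientEquivAlg _ _ (finSuccLastEquiv R n)
      (by simp [Ideal.map_span, Set.image_singleton])).trans
    (Polynomial.quotientSpanCAlgEquiv R g)

section BaseChange

open scoped TensorProduct

variable {σ : Type*} (A : Type*) [CommRing A] [Algebra R A]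

theorem ideal_map_map_eq_map_includeRight (I : Ideal (MvPolynomial σ R)) :
    I.map (map (algebraMap R A)) =
      (I.map (Algebra.TensorProduct.includeRight :
        MvPolynomial σ R →ₐ[R] A ⊗[R] MvPolynomial σ R)).map (algebraTensorAlgEquiv R A) := by
  have h : (algebraTensorAlgEquiv (σ := σ) R A).toAlgHom.toRingHom.comp
      (Algebra.TensorProduct.includeRight :
        MvPolynomial σ R →ₐ[R] A ⊗[R] MvPolynomial σ R).toRingHom = map (algebraMap R A) := by
    ext p <;> simp
  rw [← h, ← Ideal.map_map]
  rfl

noncomputable def quotientMapAlgebraMapEquivTensor (I : Ideal (MvPolynomial σ R)) :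
    (MvPolynomial σ A ⧸ I.map (map (algebraMap R A))) ≃ₐ[A] A ⊗[R] (MvPolynomial σ R ⧸ I) :=
  (Ideal.quotientEquivAlg _ _ (algebraTensorAlgEquiv R A)
      (ideal_map_map_eq_map_includeRight A I)).symm.trans
    (Algebra.TensorProduct.tensorQuotientEquiv A _ A I).symm

variable {A}

noncomputable def quotientSpanMapEquivPolynomial {f : MvPolynomial σ R}
    (e : (MvPolynomial σ R ⧸ Ideal.span {f}) ≃ₐ[R] Polynomial R) :
    (MvPolynomial σ A ⧸ Ideal.span {map (algebraMap R A) f}) ≃ₐ[A] Polynomial A :=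
  (Ideal.quotientEquivAlgOfEq A (by rw [Ideal.map_span, Set.image_singleton])).trans <|
    (quotientMapAlgebraMapEquivTensor A _).trans <|
      (Algebra.TensorProduct.congr AlgEquiv.refl e).trans (polyEquivTensor' R A).symm

end BaseChange

end MvPolynomial

theorem stmt_9_general {k : Type*} [Field k] (m : ℕ) (f : MvPolynomial (Fin 2) k)
    (hf1 : Nonempty ((MvPolynomial (Fin 2) k ⧸ Ideal.span {f}) ≃ₐ[k] Polynomial k))
    -- `κ` is the residue field `k(P) = Frac(R/P)` of `R = k[π]` at `P`
    (κ : Type*) [Field κ] [Algebra (Polynomial k) κ] [Algebra k κ] :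
    Nonempty (
      (MvPolynomial (Fin 3) κ ⧸
        Ideal.span {(C (algebraMap (Polynomial k) κ (Polynomial.X ^ m)) * X 2 -
            MvPolynomial.map (algebraMap k κ)
              (MvPolynomial.rename Fin.castSucc f) :
            MvPolynomial (Fin 3) κ)})
      ≃ₐ[κ] MvPolynomial (Fin 2) κ) := by
  obtain ⟨e⟩ := hf1
  rw [map_rename]
  by_cases hc : algebraMap (Polynomial k) κ (Polynomial.X ^ m) = 0
  · rw [hc, C_0, zero_mul, zero_sub, Ideal.span_singleton_neg]
    exact ⟨(quotientSpanRenameCastSuccEquiv _).trans <|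
      (Polynomial.mapAlgEquiv (quotientSpanMapEquivPolynomial e)).trans <|
        ((finSuccLastEquiv κ 1).trans (Polynomial.mapAlgEquiv (uniqueAlgEquiv κ (Fin 1)))).symm⟩
  · exact ⟨quotientSpanCMulXLastSubRenameEquiv (Ne.isUnit hc) _⟩

/-- Asanuma/Gupta example: for `R = k[π]`, `char k = p > 0`, and
`A = R[X,Y,Z]/(πᵐZ - f(X,Y))` with `k[X,Y]/(f) ≅ k[1]` but
`k[X,Y] ≠ k[f][1]`, every fibre `A ⊗_R k(P)` — which is the quotient of
`k(P)[X,Y,Z]` by the base-changed relation `πᵐZ - f(X,Y)` — is a polynomial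
ring in two variables over the residue field `k(P) = Frac(R/P)`. -/
theorem stmt_9 {k : Type*} [Field k] (p : ℕ) (hp : p.Prime) (hchar : ringChar k = p)
    (m : ℕ) (hm : 0 < m) (f : MvPolynomial (Fin 2) k)
    (hf1 : Nonempty ((MvPolynomial (Fin 2) k ⧸ Ideal.span {f}) ≃ₐ[k] Polynomial k))
    (hf2 : ¬ ∃ g : MvPolynomial (Fin 2) k,
      AlgebraicIndependent k ![f, g] ∧ Algebra.adjoin k {f, g} = ⊤)
    (P : Ideal (Polynomial k)) [P.IsPrime]
    -- `κ` is the residue field `k(P) = Frac(R/P)` of `R = k[π]` at `P`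
    (κ : Type*) [Field κ] [Algebra (Polynomial k ⧸ P) κ]
    [IsFractionRing (Polynomial k ⧸ P) κ]
    [Algebra (Polynomial k) κ] [IsScalarTower (Polynomial k) (Polynomial k ⧸ P) κ]
    [Algebra k κ] [IsScalarTower k (Polynomial k) κ] :
    Nonempty (
      (MvPolynomial (Fin 3) κ ⧸
        Ideal.span {(C (algebraMap (Polynomial k) κ (Polynomial.X ^ m)) * X 2 -
            MvPolynomial.map (algebraMap k κ)
              (MvPolynomial.rename Fin.castSucc f) :
            MvPolynomial (Fin 3) κ)})
      ≃ₐ[κ] MvPolynomial (Fin 2) κ) :=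
  stmt_9_general m f hf1 κ
end

section
/- Let k be a field, B = k[X,Y] the polynomial ring in two variables, I = (X², Y−1) an ideal of B, and A = k + I the subring. Let F = X²T² − Y ∈ A[T]. Then A[T]/(F·A[T]) is isomorphic to a polynomial ring in two variables over k, although A is not normal. -/
set_option maxHeartbeats 1000000
set_option synthInstance.maxHeartbeats 1000000

open MvPolynomial

noncomputable section StmtTwelve

variable (k : Type*) [Field k]

/-- The ideal `I = (X², Y-1)` of `B = k[X,Y]`. -/
def Istmt : Ideal (MvPolynomial (Fin 2) k) := Ideal.span {X 0 ^ 2, X 1 - 1}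

/-- The subring `A = k + I` of `B = k[X,Y]`, realized as the `k`-subalgebra
generated by the ideal `I` (since `I` is an ideal, this is exactly `k + I`). -/
def Asub : Subalgebra k (MvPolynomial (Fin 2) k) :=
  Algebra.adjoin k (Istmt k : Set (MvPolynomial (Fin 2) k))

/-- The ring `A = k + I` as a type. -/
def Astmt : Type _ := ↥(Asub k)

instance : CommRing (Astmt k) := inferInstanceAs (CommRing ↥(Asub k))
instance : Algebra k (Astmt k) := inferInstanceAs (Algebra k ↥(Asub k))

lemma X0sq_mem : (X 0 ^ 2 : MvPolynomial (Fin 2) k) ∈ Asub k :=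
  Algebra.subset_adjoin (Ideal.subset_span (Set.mem_insert _ _))

lemma X1_mem : (X 1 : MvPolynomial (Fin 2) k) ∈ Asub k := by
  have h : (X 1 - 1 : MvPolynomial (Fin 2) k) ∈ Asub k :=
    Algebra.subset_adjoin (Ideal.subset_span (Set.mem_insert_of_mem _ rfl))
  simpa using add_mem h (one_mem (Asub k))

/-- `F = X²T² - Y ∈ A[T]`. -/
def Fstmt : Polynomial (Astmt k) :=
  Polynomial.C (⟨X 0 ^ 2, X0sq_mem k⟩ : Asub k) * Polynomial.X ^ 2 -
    Polynomial.C (⟨X 1, X1_mem k⟩ : Asub k)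

/-!
Substituting `Y ↦ X²T²` gives a map `A[T] → k[X,T]` that kills `F`. It is onto because
`X³T² - X(Y-1) = X + XF` lies in `A[T]` and maps to `X`. Over `B` the same substitution has kernel
`F·B[T]`, since `B[T]/(F)` is generated by `X` and `T` (`Y ≡ X²T²`). The kernel over `A` is then
`F·B[T] ∩ A[T] = F·A[T]`: `F ≡ -1` modulo `I[T]` and `I ⊆ A`, so `F g ∈ A[T]` forces
`g = g(F + 1) - Fg ∈ A[T]`.

`A` is not normal: `X = X(Y-1)/(Y-1)` lies in its fraction field and `X² ∈ A`, but `X ∉ A`, since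
`A` maps into `k` under `k[X,Y] → k[ε]`, `X ↦ ε`, `Y ↦ 1`.
-/

open Polynomial in
theorem Polynomial.mem_span_singleton_of_map_mem_span_singleton {A B : Type*} [CommRing A]
    [CommRing B] {ι : A →+* B} (hι : Function.Injective ι) (I : Ideal B)
    (hI : (I : Set B) ⊆ ι.range) {F p : A[X]} (hF : F.map ι + 1 ∈ I.map C)
    (hp : p.map ι ∈ Ideal.span {F.map ι}) : p ∈ Ideal.span {F} := by
  obtain ⟨g, hg⟩ := Ideal.mem_span_singleton'.mp hp
  have hg_coeff : ∀ n, g.coeff n ∈ Set.range ι := by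
    intro n
    have hgF : g * (F.map ι + 1) ∈ I.map C := Ideal.mul_mem_left _ g hF
    have hsplit : g.coeff n = (g * (F.map ι + 1)).coeff n - (p.map ι).coeff n := by
      rw [← hg, mul_add, mul_one, coeff_add]; ring
    rw [hsplit]
    exact ι.range.sub_mem (hI (Ideal.mem_map_C_iff.mp hgF n)) (coeff_map ι n ▸ ⟨_, rfl⟩)
  obtain ⟨g', rfl⟩ := (lifts_iff_coeff_lifts g).mpr hg_coeff
  refine Ideal.mem_span_singleton'.mpr ⟨g', map_injective ι hι ?_⟩
  rw [Polynomial.map_mul]; exact hg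

theorem Subalgebra.not_isIntegrallyClosed_of_sq_mem {R B : Type*} [CommRing R] [CommRing B]
    [IsDomain B] [Algebra R B] (A : Subalgebra R B) {x b : B} (hb : b ∈ A) (hb0 : b ≠ 0)
    (hxb : x * b ∈ A) (hx2 : x ^ 2 ∈ A) (hx : x ∉ A) : ¬ IsIntegrallyClosed A := by
  intro hA
  let K := FractionRing A
  have hbK : algebraMap A K ⟨b, hb⟩ ≠ 0 :=
    IsFractionRing.to_map_ne_zero_of_mem_nonZeroDivisors
      (mem_nonZeroDivisors_of_ne_zero (fun h => hb0 (congrArg Subtype.val h)))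
  set y : K := algebraMap A K ⟨x * b, hxb⟩ / algebraMap A K ⟨b, hb⟩
  have hy2 : y ^ 2 = algebraMap A K ⟨x ^ 2, hx2⟩ := by
    rw [div_pow, div_eq_iff (pow_ne_zero _ hbK), ← map_pow, ← map_pow, ← map_mul]
    exact congrArg _ (Subtype.ext (mul_pow x b 2))
  have hy : IsIntegral A y :=
    ⟨Polynomial.X ^ 2 - Polynomial.C ⟨x ^ 2, hx2⟩, Polynomial.monic_X_pow_sub_C _ two_ne_zero,
      by simp [hy2]⟩
  obtain ⟨z, hz⟩ := IsIntegrallyClosed.isIntegral_iff.mp hy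
  have hzb : z * ⟨b, hb⟩ = ⟨x * b, hxb⟩ :=
    IsFractionRing.injective A K (by rw [map_mul, hz, div_mul_cancel₀ _ hbK])
  have hzx : (z : B) = x := mul_right_cancel₀ hb0 (congrArg Subtype.val hzb)
  exact hx (hzx ▸ z.2)

lemma mem_Asub_of_mem_Istmt {b : MvPolynomial (Fin 2) k} (h : b ∈ Istmt k) : b ∈ Asub k :=
  Algebra.subset_adjoin h

lemma X0_sq_mem_Istmt : (X 0 ^ 2 : MvPolynomial (Fin 2) k) ∈ Istmt k :=
  Ideal.subset_span (Set.mem_insert _ _)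

lemma X1_sub_one_mem_Istmt : (X 1 - 1 : MvPolynomial (Fin 2) k) ∈ Istmt k :=
  Ideal.subset_span (Set.mem_insert_of_mem _ rfl)

def inc : Astmt k →+* MvPolynomial (Fin 2) k := (Asub k).val.toRingHom

def Astmt.mk {b : MvPolynomial (Fin 2) k} (h : b ∈ Asub k) : Astmt k := ⟨b, h⟩

@[simp] lemma inc_mk {b : MvPolynomial (Fin 2) k} (h : b ∈ Asub k) : inc k (Astmt.mk k h) = b :=
  rfl

lemma inc_injective : Function.Injective (inc k) := Subtype.val_injective

lemma Fstmt_eq : Fstmt k = Polynomial.C (Astmt.mk k (X0sq_mem k)) * Polynomial.X ^ 2 -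
    Polynomial.C (Astmt.mk k (X1_mem k)) := rfl

lemma map_inc_Fstmt : (Fstmt k).map (inc k) =
    Polynomial.C (X 0 ^ 2) * Polynomial.X ^ 2 - Polynomial.C (X 1) := by
  simp [Fstmt_eq]

lemma map_inc_Fstmt_add_one_mem : (Fstmt k).map (inc k) + 1 ∈ (Istmt k).map Polynomial.C := by
  have h : (Fstmt k).map (inc k) + 1 =
      Polynomial.C (X 0 ^ 2) * Polynomial.X ^ 2 - Polynomial.C (X 1 - 1) := by
    rw [map_inc_Fstmt, Polynomial.C_sub, Polynomial.C_1]; ring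
  rw [h]
  exact sub_mem (Ideal.mul_mem_right _ _ (Ideal.mem_map_of_mem _ (X0_sq_mem_Istmt k)))
    (Ideal.mem_map_of_mem _ (X1_sub_one_mem_Istmt k))

-- The substitution `Y ↦ X²T²` on `B[T] = k[X,Y][T]`; in the target `k[X,T]`, `X 0` is `X` and
-- `X 1` is `T`.
def substY : Polynomial (MvPolynomial (Fin 2) k) →ₐ[k] MvPolynomial (Fin 2) k :=
  Polynomial.aevalTower (aeval ![X 0, X 0 ^ 2 * X 1 ^ 2]) (X 1)

def liftB : MvPolynomial (Fin 2) k →ₐ[k] Polynomial (MvPolynomial (Fin 2) k) :=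
  aeval ![Polynomial.C (X 0), Polynomial.X]

lemma mkₐ_liftB_substY :
    (Ideal.Quotient.mkₐ k (Ideal.span {(Fstmt k).map (inc k)})).comp ((liftB k).comp (substY k)) =
      Ideal.Quotient.mkₐ k _ := by
  refine Polynomial.algHom_ext' (MvPolynomial.algHom_ext fun i => ?_) ?_
  · fin_cases i
    · simp [substY, liftB]
    · have hY : Ideal.Quotient.mk (Ideal.span {(Fstmt k).map (inc k)})
          (Polynomial.C (X 0 ^ 2) * Polynomial.X ^ 2) =
            Ideal.Quotient.mk _ (Polynomial.C (X 1 : MvPolynomial (Fin 2) k)) :=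
        Ideal.Quotient.eq.mpr (Ideal.subset_span (map_inc_Fstmt k).symm)
      simpa [substY, liftB] using hY
  · simp [substY, liftB]

lemma ker_substY_le : RingHom.ker (substY k) ≤ Ideal.span {(Fstmt k).map (inc k)} := by
  intro p hp
  rw [← Ideal.Quotient.eq_zero_iff_mem, ← Ideal.Quotient.mkₐ_eq_mk k,
    ← AlgHom.congr_fun (mkₐ_liftB_substY k) p]
  simp [(RingHom.mem_ker).mp hp]

def substYA : Polynomial (Astmt k) →ₐ[k] MvPolynomial (Fin 2) k :=
  (substY k).comp (Polynomial.mapAlgHom (Asub k).val)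

lemma substYA_apply (p : Polynomial (Astmt k)) : substYA k p = substY k (p.map (inc k)) := rfl

lemma substYA_C (a : Astmt k) :
    substYA k (Polynomial.C a) = aeval ![X 0, X 0 ^ 2 * X 1 ^ 2] (inc k a) := by
  rw [substYA_apply, Polynomial.map_C, substY, Polynomial.aevalTower_C]

lemma substYA_X : substYA k Polynomial.X = X 1 := by
  rw [substYA_apply, Polynomial.map_X, substY, Polynomial.aevalTower_X]

lemma ker_substYA : RingHom.ker (substYA k) = Ideal.span {Fstmt k} := by
  refine le_antisymm (fun p hp => ?_) (Ideal.span_le.mpr ?_)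
  · exact Polynomial.mem_span_singleton_of_map_mem_span_singleton (inc_injective k) (Istmt k)
      (fun b hb => ⟨Astmt.mk k (mem_Asub_of_mem_Istmt k hb), rfl⟩) (map_inc_Fstmt_add_one_mem k)
      (ker_substY_le k hp)
  · rintro _ rfl
    simp [substYA_apply, map_inc_Fstmt, substY]

lemma X0_mul_mem_Asub {b : MvPolynomial (Fin 2) k} (hb : b ∈ Istmt k) : X 0 * b ∈ Asub k :=
  mem_Asub_of_mem_Istmt k (Ideal.mul_mem_left _ _ hb)

-- `q = X + X F` in `B[T]`, so `q` is a preimage of `X` in `A[T]`.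
def preX : Polynomial (Astmt k) :=
  Polynomial.C (Astmt.mk k (X0_mul_mem_Asub k (X0_sq_mem_Istmt k))) * Polynomial.X ^ 2 -
    Polynomial.C (Astmt.mk k (X0_mul_mem_Asub k (X1_sub_one_mem_Istmt k)))

lemma substYA_preX : substYA k (preX k) = X 0 := by
  rw [preX, map_sub, map_mul, map_pow, substYA_C, substYA_C, substYA_X, inc_mk, inc_mk]
  simp only [map_mul, map_pow, map_sub, map_one, aeval_X, Matrix.cons_val_zero,
    Matrix.cons_val_one, Matrix.cons_val_fin_one]
  ring

lemma substYA_surjective : Function.Surjective (substYA k) := by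
  let σ : MvPolynomial (Fin 2) k →ₐ[k] Polynomial (Astmt k) := aeval ![preX k, Polynomial.X]
  have hσ : (substYA k).comp σ = AlgHom.id k _ := by
    refine MvPolynomial.algHom_ext fun i => ?_
    fin_cases i
    · simp [σ, substYA_preX]
    · simp [σ, substYA_X]
  exact fun p => ⟨σ p, AlgHom.congr_fun hσ p⟩

def toDualNumber : MvPolynomial (Fin 2) k →ₐ[k] DualNumber k := aeval ![DualNumber.eps, 1]

lemma Asub_le_comap_bot :
    Asub k ≤ (⊥ : Subalgebra k (DualNumber k)).comap (toDualNumber k) := by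
  refine Algebra.adjoin_le fun b hb => ?_
  have hker : Istmt k ≤ RingHom.ker (toDualNumber k) := by
    refine Ideal.span_le.mpr ?_
    rintro _ (rfl | rfl) <;> simp [toDualNumber, pow_two]
  simp [(RingHom.mem_ker).mp (hker hb)]

lemma X0_not_mem_Asub : (X 0 : MvPolynomial (Fin 2) k) ∉ Asub k := by
  intro h
  obtain ⟨c, hc⟩ := Algebra.mem_bot.mp (Asub_le_comap_bot k h)
  simpa [toDualNumber, TrivSqZeroExt.algebraMap_eq_inl] using congrArg TrivSqZeroExt.snd hc

/-- Bhatwadekar's example: `A[T]/(F) ≅ k[X,T]` is a polynomial ring in two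
variables over `k`, although `A` is not normal. -/
theorem stmt_12 :
    Nonempty ((Polynomial (Astmt k) ⧸ Ideal.span {Fstmt k}) ≃ₐ[k]
      MvPolynomial (Fin 2) k) ∧ ¬ IsIntegrallyClosed (Astmt k) := by
  refine ⟨⟨(Ideal.quotientEquivAlgOfEq k (ker_substYA k)).symm.trans
    (Ideal.quotientKerAlgEquivOfSurjective (substYA_surjective k))⟩, ?_⟩
  have hY : (X 1 - 1 : MvPolynomial (Fin 2) k) ≠ 0 := fun h => by
    simpa using congrArg constantCoeff h
  exact (Asub k).not_isIntegrallyClosed_of_sq_mem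
    (mem_Asub_of_mem_Istmt k (X1_sub_one_mem_Istmt k)) hY
    (X0_mul_mem_Asub k (X1_sub_one_mem_Istmt k)) (X0sq_mem k) (X0_not_mem_Asub k)

end StmtTwelve
end
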